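/- The Hermitian form (f̃, f̃)_𝔍 = -∫_{S²} \overline{f̃_μ(p)} f̃^μ(p) d²p is nonnegative on the space of electric-type transversal states f̃_μ(p) = Σᵢ₌₁ᴺ αᵢ u_{iμ}/(uᵢ·p) with Σᵢ αᵢ = 0. Equivalently: for any finite collection of future-pointing unit timelike vectors u₁,…,u_N and complex numbers α₁,…,α_N with Σαᵢ = 0, one has Σᵢⱼ \overline{αᵢ} αⱼ (f̃^{|uᵢ⟩}, f̃^{|uⱼ⟩})_𝔍 ≥ 0. -/
import Mathlib


open MeasureTheory
open scoped ComplexOrder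

/-- Minkowski bilinear form on `ℝ⁴` with signature `(+,-,-,-)`. -/
def mink (u v : Fin 4 → ℝ) : ℝ :=
  u 0 * v 0 - u 1 * v 1 - u 2 * v 2 - u 3 * v 3

/-- `u · p` for `p = (1, n)` on the forward light cone, `n ∈ S² ⊂ ℝ³`. -/
def minkp (u : Fin 4 → ℝ) (n : EuclideanSpace ℝ (Fin 3)) : ℝ :=
  u 0 - u 1 * n 0 - u 2 * n 1 - u 3 * n 2

/-- The surface measure on the unit sphere `S² ⊂ ℝ³` (total mass `4π`). -/
noncomputable def sphereMeasure :
    Measure (Metric.sphere (0 : EuclideanSpace ℝ (Fin 3)) 1) :=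
  (volume : Measure (EuclideanSpace ℝ (Fin 3))).toSphere

/-- The Hermitian form `(f̃^{|u⟩}, f̃^{|v⟩})_𝔍 = -∫_{S²} (u·v)/((u·p)(v·p)) d²p`
(where `f̃^{|u⟩}_μ(p) = u_μ/(u·p)`, `p = (1,n)`). -/
noncomputable def kreinForm (u v : Fin 4 → ℝ) : ℝ :=
  - ∫ n : Metric.sphere (0 : EuclideanSpace ℝ (Fin 3)) 1,
      mink u v / (minkp u (n : EuclideanSpace ℝ (Fin 3)) *
        minkp v (n : EuclideanSpace ℝ (Fin 3)))
    ∂sphereMeasure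

/-! ### Auxiliary lemmas -/

lemma sphere_coord_sq {n : EuclideanSpace ℝ (Fin 3)}
    (hn : ‖n‖ = 1) : n 0 ^ 2 + n 1 ^ 2 + n 2 ^ 2 = 1 := by
  have h := EuclideanSpace.norm_eq n
  rw [hn] at h
  have h2 : (∑ i, ‖n i‖ ^ 2) = 1 := by
    have := congrArg (· ^ 2) h
    simpa [Real.sq_sqrt (Finset.sum_nonneg fun i _ => sq_nonneg _)] using this.symm
  simpa [Fin.sum_univ_three, Real.norm_eq_abs, sq_abs] using h2

lemma norm_of_sphere (n : Metric.sphere (0 : EuclideanSpace ℝ (Fin 3)) 1) :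
    ‖(n : EuclideanSpace ℝ (Fin 3))‖ = 1 := by
  have := n.2
  simpa [Metric.mem_sphere, dist_eq_norm] using this

lemma minkp_pos {u : Fin 4 → ℝ} (hu : mink u u = 1) (hu0 : 0 < u 0)
    (n : Metric.sphere (0 : EuclideanSpace ℝ (Fin 3)) 1) :
    0 < minkp u (n : EuclideanSpace ℝ (Fin 3)) := by
  have hn := sphere_coord_sq (norm_of_sphere n)
  set m : EuclideanSpace ℝ (Fin 3) := (n : EuclideanSpace ℝ (Fin 3))
  unfold mink at hu
  unfold minkp
  nlinarith [sq_nonneg (u 1 * m 1 - u 2 * m 0), sq_nonneg (u 1 * m 2 - u 3 * m 0),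
    sq_nonneg (u 2 * m 2 - u 3 * m 1),
    sq_nonneg (u 1 * m 0 + u 2 * m 1 + u 3 * m 2 - u 0), hn, hu0]

lemma minkp_cont (u : Fin 4 → ℝ) :
    Continuous fun n : Metric.sphere (0 : EuclideanSpace ℝ (Fin 3)) 1 =>
      minkp u (n : EuclideanSpace ℝ (Fin 3)) := by
  unfold minkp
  have h : ∀ i : Fin 3, Continuous fun n : Metric.sphere (0 : EuclideanSpace ℝ (Fin 3)) 1 =>
      (n : EuclideanSpace ℝ (Fin 3)) i :=
    fun i => (EuclideanSpace.proj i).continuous.comp continuous_subtype_val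
  exact ((continuous_const.sub (continuous_const.mul (h 0))).sub
    (continuous_const.mul (h 1))).sub (continuous_const.mul (h 2))

instance : IsFiniteMeasure sphereMeasure := by
  unfold sphereMeasure; infer_instance

lemma krein_integrable {u v : Fin 4 → ℝ}
    (hu : mink u u = 1) (hu0 : 0 < u 0) (hv : mink v v = 1) (hv0 : 0 < v 0) :
    Integrable (fun n : Metric.sphere (0 : EuclideanSpace ℝ (Fin 3)) 1 =>
      mink u v / (minkp u (n : EuclideanSpace ℝ (Fin 3)) *
        minkp v (n : EuclideanSpace ℝ (Fin 3)))) sphereMeasure := by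
  have hcont : Continuous (fun n : Metric.sphere (0 : EuclideanSpace ℝ (Fin 3)) 1 =>
      mink u v / (minkp u (n : EuclideanSpace ℝ (Fin 3)) *
        minkp v (n : EuclideanSpace ℝ (Fin 3)))) := by
    refine continuous_const.div ((minkp_cont u).mul (minkp_cont v)) fun n => ?_
    exact (mul_pos (minkp_pos hu hu0 n) (minkp_pos hv hv0 n)).ne'
  exact hcont.integrable_of_hasCompactSupport (HasCompactSupport.of_compactSpace _)

lemma kreinForm_symm (u v : Fin 4 → ℝ) : kreinForm u v = kreinForm v u := by
  unfold kreinForm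
  congr 1
  congr 1
  funext n
  unfold mink
  ring

/-- Pointwise nonpositivity: for `p = (1,n)` null and `∑ c = 0`, the quadratic
form `∑ᵢⱼ cᵢcⱼ (uᵢ·uⱼ)/((uᵢ·p)(uⱼ·p)) = p-transversal Minkowski square ≤ 0`. -/
lemma pointwise_nonpos {N : ℕ} (u : Fin N → (Fin 4 → ℝ)) (c : Fin N → ℝ)
    (hc : ∑ i, c i = 0) (d : Fin N → ℝ) (hd : ∀ i, 0 < d i)
    (n0 n1 n2 : ℝ) (hn : n0 ^ 2 + n1 ^ 2 + n2 ^ 2 = 1)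
    (hrel : ∀ i, d i = u i 0 - u i 1 * n0 - u i 2 * n1 - u i 3 * n2) :
    ∑ i, ∑ j, c i * c j * (mink (u i) (u j) / (d i * d j)) ≤ 0 := by
  set G : Fin 4 → ℝ := fun μ => ∑ i, c i * u i μ / d i with hG
  have h4 : ∀ μ : Fin 4, G μ * G μ
      = ∑ i, ∑ j, (c i * u i μ / d i) * (c j * u j μ / d j) :=
    fun μ => Finset.sum_mul_sum _ _ _ _
  have hexp : ∑ i, ∑ j, c i * c j * (mink (u i) (u j) / (d i * d j))
      = G 0 * G 0 - G 1 * G 1 - G 2 * G 2 - G 3 * G 3 := by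
    rw [h4 0, h4 1, h4 2, h4 3, ← Finset.sum_sub_distrib, ← Finset.sum_sub_distrib,
      ← Finset.sum_sub_distrib]
    refine Finset.sum_congr rfl fun i _ => ?_
    rw [← Finset.sum_sub_distrib, ← Finset.sum_sub_distrib, ← Finset.sum_sub_distrib]
    refine Finset.sum_congr rfl fun j _ => ?_
    have hdi := (hd i).ne'
    have hdj := (hd j).ne'
    unfold mink
    field_simp
  have hterm : ∀ i, c i * u i 0 / d i
      = c i * u i 1 / d i * n0 + c i * u i 2 / d i * n1 + c i * u i 3 / d i * n2 + c i := by
    intro i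
    have hdi := (hd i).ne'
    have h := hrel i
    field_simp
    rw [h]
    ring
  have hG0 : G 0 = G 1 * n0 + G 2 * n1 + G 3 * n2 := by
    simp only [hG]
    rw [Finset.sum_congr rfl fun i _ => hterm i, Finset.sum_add_distrib,
      Finset.sum_add_distrib, Finset.sum_add_distrib, hc, ← Finset.sum_mul,
      ← Finset.sum_mul, ← Finset.sum_mul]
    ring
  rw [hexp, hG0]
  nlinarith [sq_nonneg (G 1 * n1 - G 2 * n0), sq_nonneg (G 1 * n2 - G 3 * n0),
    sq_nonneg (G 2 * n2 - G 3 * n1), sq_nonneg (G 1 * n0 + G 2 * n1 + G 3 * n2), hn]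

/-- Real version of the main theorem. -/
lemma kreinForm_sum_nonneg {N : ℕ} (u : Fin N → (Fin 4 → ℝ)) (c : Fin N → ℝ)
    (hu : ∀ i, mink (u i) (u i) = 1) (hu0 : ∀ i, 0 < u i 0)
    (hc : ∑ i, c i = 0) :
    0 ≤ ∑ i, ∑ j, c i * c j * kreinForm (u i) (u j) := by
  set g : Fin N → Fin N → Metric.sphere (0 : EuclideanSpace ℝ (Fin 3)) 1 → ℝ :=
    fun i j n => mink (u i) (u j) / (minkp (u i) (n : EuclideanSpace ℝ (Fin 3)) *
      minkp (u j) (n : EuclideanSpace ℝ (Fin 3))) with hg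
  have hInt : ∀ i j, Integrable (fun n => c i * c j * g i j n) sphereMeasure :=
    fun i j => (krein_integrable (hu i) (hu0 i) (hu j) (hu0 j)).const_mul _
  have step1 : ∑ i, ∑ j, c i * c j * kreinForm (u i) (u j)
      = - ∫ n, (∑ i, ∑ j, c i * c j * g i j n) ∂sphereMeasure := by
    have : ∀ i, ∑ j, c i * c j * kreinForm (u i) (u j)
        = - ∫ n, (∑ j, c i * c j * g i j n) ∂sphereMeasure := by
      intro i
      rw [integral_finset_sum _ (fun j _ => hInt i j)]
      rw [← Finset.sum_neg_distrib]
      refine Finset.sum_congr rfl fun j _ => ?_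
      unfold kreinForm
      rw [mul_neg, integral_const_mul]
    rw [Finset.sum_congr rfl fun i _ => this i, Finset.sum_neg_distrib,
      ← integral_finset_sum _ (fun i _ => integrable_finset_sum _ (fun j _ => hInt i j))]
  rw [step1, neg_nonneg]
  refine integral_nonpos fun n => ?_
  have hn := sphere_coord_sq (norm_of_sphere n)
  exact pointwise_nonpos u c hc
    (fun i => minkp (u i) (n : EuclideanSpace ℝ (Fin 3)))
    (fun i => minkp_pos (hu i) (hu0 i) n)
    ((n : EuclideanSpace ℝ (Fin 3)) 0) ((n : EuclideanSpace ℝ (Fin 3)) 1)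
    ((n : EuclideanSpace ℝ (Fin 3)) 2) hn (fun i => rfl)

/-- The Hermitian form `(·,·)_𝔍` is nonnegative on electric-type transversal
states: for future-pointing unit timelike `u₁,…,u_N` and `α₁,…,α_N ∈ ℂ` with
`Σᵢ αᵢ = 0`, one has `Σᵢⱼ conj(αᵢ) αⱼ (f̃^{|uᵢ⟩}, f̃^{|uⱼ⟩})_𝔍 ≥ 0`. -/
theorem kreinForm_nonneg_on_transversal
    {N : ℕ} (u : Fin N → (Fin 4 → ℝ)) (α : Fin N → ℂ)
    (hu : ∀ i, mink (u i) (u i) = 1) (hu0 : ∀ i, 0 < u i 0)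
    (hα : ∑ i, α i = 0) :
    (0 : ℂ) ≤ ∑ i, ∑ j, (starRingEnd ℂ) (α i) * α j * (kreinForm (u i) (u j) : ℂ) := by
  have ha : ∑ i, (α i).re = 0 := by
    rw [← Complex.re_sum, hα, Complex.zero_re]
  have hb : ∑ i, (α i).im = 0 := by
    rw [← Complex.im_sum, hα, Complex.zero_im]
  have hQa := kreinForm_sum_nonneg u (fun i => (α i).re) hu hu0 ha
  have hQb := kreinForm_sum_nonneg u (fun i => (α i).im) hu hu0 hb
  rw [Complex.le_def]
  constructor
  · simp only [Complex.zero_re, Complex.re_sum]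
    have hre : ∀ i j, ((starRingEnd ℂ) (α i) * α j * (kreinForm (u i) (u j) : ℂ)).re
        = ((α i).re * (α j).re + (α i).im * (α j).im) * kreinForm (u i) (u j) := by
      intro i j
      simp only [Complex.mul_re, Complex.mul_im, Complex.conj_re, Complex.conj_im,
        Complex.ofReal_re, Complex.ofReal_im]
      ring
    rw [Finset.sum_congr rfl fun i _ => Finset.sum_congr rfl fun j _ => hre i j]
    simp_rw [add_mul, Finset.sum_add_distrib]
    exact add_nonneg hQa hQb
  · simp only [Complex.zero_im, Complex.im_sum]
    have him : ∀ i j, ((starRingEnd ℂ) (α i) * α j * (kreinForm (u i) (u j) : ℂ)).im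
        = ((α i).re * (α j).im - (α i).im * (α j).re) * kreinForm (u i) (u j) := by
      intro i j
      simp only [Complex.mul_re, Complex.mul_im, Complex.conj_re, Complex.conj_im,
        Complex.ofReal_re, Complex.ofReal_im]
      ring
    rw [Finset.sum_congr rfl fun i _ => Finset.sum_congr rfl fun j _ => him i j]
    set T := ∑ i, ∑ j, ((α i).re * (α j).im - (α i).im * (α j).re) * kreinForm (u i) (u j)
      with hT
    have hTT : T = -T := by
      calc T = ∑ j, ∑ i, ((α i).re * (α j).im - (α i).im * (α j).re) * kreinForm (u i) (u j) :=
            Finset.sum_comm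
        _ = ∑ i, ∑ j, (-(((α i).re * (α j).im - (α i).im * (α j).re)
              * kreinForm (u i) (u j))) := by
            refine Finset.sum_congr rfl fun i _ => Finset.sum_congr rfl fun j _ => ?_
            rw [kreinForm_symm (u j) (u i)]
            ring
        _ = -T := by
            rw [hT]
            simp only [← Finset.sum_neg_distrib]
    linarith
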